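/- Let A(j) be a sequence of contractions on a Hilbert space H (‖A(j)‖ ≤ 1) such that A(j)* A(j) converges weakly to the orthogonal projection Θ onto a closed subspace on which each A(j) acts as the identity (A(j)Θ = Θ). Then A(j) converges strongly to Θ: for every f ∈ H, ‖A(j)f − Θf‖ → 0. -/
import Mathlib


open Filter ContinuousLinearMap
open scoped RealInnerProductSpace

/-- If `A j` are contractions on a Hilbert space with `A(j)*A(j) →_w Θ`, where
`Θ` is an orthogonal projection on whose range each `A j` acts as the identity
(`A j ∘ Θ = Θ`), then `A j → Θ` strongly: `‖A(j)f − Θf‖ → 0` for every `f`. -/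
theorem contractions_weak_adjoint_mul_to_strong {H : Type*} [NormedAddCommGroup H]
    [InnerProductSpace ℝ H] [CompleteSpace H]
    (Θ : H →L[ℝ] H) (hΘsa : IsSelfAdjoint Θ) (hΘidem : Θ ∘L Θ = Θ)
    (A : ℕ → H →L[ℝ] H) (hA : ∀ j, ‖A j‖ ≤ 1) (hAΘ : ∀ j, A j ∘L Θ = Θ)
    (hweak : ∀ f g : H,
      Tendsto (fun j => ⟪(adjoint (A j)) ((A j) f), g⟫) atTop (nhds ⟪Θ f, g⟫)) :
    ∀ f : H, Tendsto (fun j => ‖A j f - Θ f‖) atTop (nhds 0) := by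
  intro f
  have key : ∀ j, ‖A j f - Θ f‖ ^ 2 =
      ⟪adjoint (A j) (A j f), f⟫ - 2 * ⟪adjoint (A j) (A j f), Θ f⟫ + ‖Θ f‖ ^ 2 := by
    intro j
    have hAΘf : A j (Θ f) = Θ f := by
      conv_rhs => rw [← hAΘ j]
      rfl
    have h1 : ‖A j f‖ ^ 2 = ⟪adjoint (A j) (A j f), f⟫ := by
      rw [adjoint_inner_left, real_inner_self_eq_norm_sq]
    have h2 : ⟪A j f, Θ f⟫ = ⟪adjoint (A j) (A j f), Θ f⟫ := by
      rw [adjoint_inner_left]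
      conv_lhs => rw [← hAΘf]
    rw [norm_sub_sq_real, h1, h2]
  have hΘff : ⟪Θ f, f⟫ = ‖Θ f‖ ^ 2 := by
    have : Θ (Θ f) = Θ f := by
      conv_rhs => rw [← hΘidem]
      rfl
    calc ⟪Θ f, f⟫ = ⟪Θ (Θ f), f⟫ := by rw [this]
      _ = ⟪Θ f, Θ f⟫ := by
          nth_rewrite 1 [← hΘsa.adjoint_eq]
          rw [adjoint_inner_left]
      _ = ‖Θ f‖ ^ 2 := real_inner_self_eq_norm_sq _
  have hsq : Tendsto (fun j => ‖A j f - Θ f‖ ^ 2) atTop (nhds 0) := by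
    have h1 := hweak f f
    have h2 := (hweak f (Θ f)).const_mul (2 : ℝ)
    have := (h1.sub h2).add (tendsto_const_nhds (x := ‖Θ f‖ ^ 2))
    simp only [key]
    convert this using 2
    rw [hΘff, real_inner_self_eq_norm_sq]
    ring
  have := hsq.sqrt
  simp only [Real.sqrt_sq (norm_nonneg _), Real.sqrt_zero] at this
  exact this
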